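/- arXiv:1810.03021 — 2 statements merged into one kernel-verified Lean document; each statement's English description precedes it below -/
import Mathlib

section
/- Define K, W : ℝ × ℝ → ℝ and f : ℝ → ℝ by K(t,q) = ((1/8)sin(t) + (1/8)sin(√2 t) + 3/4)·q², W(t,q) = (1/4)q⁴, and f(t) = (1/32)e^{−t²}. Then K, W satisfy conditions (C1)–(C6) (with b₁ = 1/2, b₂ = 1, μ = 4, m = 1/4), M := sup{W(t,q) : t ∈ ℝ, |q| = 1} = 1/4 < (1/2)·b̄₁ where b̄₁ := min{1, 2b₁} = 1, f is continuous, bounded, and (∫_{−∞}^{∞}|f(t)|² dt)^{1/2} < (√2/4)(b̄₁ − 2M). Consequently, there exists a twice continuously differentiable q : ℝ → ℝ with q̈(t) − ∇_qK(t,q(t)) + ∇_qW(t,q(t)) = f(t) for all t ∈ ℝ and q(t), q̇(t) → 0 as t → ±∞. -/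
open MeasureTheory Filter Set BoundedContinuousFunction

/-- The potential `K` of Example 2. -/
noncomputable def K₂ (t q : ℝ) : ℝ :=
  (1 / 8 * Real.sin t + 1 / 8 * Real.sin (Real.sqrt 2 * t) + 3 / 4) * q ^ 2

/-- The potential `W` of Example 2. -/
noncomputable def W₂ (t q : ℝ) : ℝ := 1 / 4 * q ^ 4

/-- The forcing term `f` of Example 2. -/
noncomputable def f₂ (t : ℝ) : ℝ := 1 / 32 * Real.exp (-t ^ 2)

lemma tendsto_exp_mul_atBot {c : ℝ} (hc : 0 < c) :
    Tendsto (fun x : ℝ => Real.exp (c * x)) atBot (nhds 0) :=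
  Real.tendsto_exp_atBot.comp (tendsto_const_mul_atBot_of_pos hc |>.2 tendsto_id)

lemma tendsto_exp_neg_mul_atTop {c : ℝ} (hc : 0 < c) :
    Tendsto (fun x : ℝ => Real.exp (-(c * x))) atTop (nhds 0) :=
  Real.tendsto_exp_atBot.comp (tendsto_neg_atBot_iff.mpr ((tendsto_const_mul_atTop_of_pos hc).2 tendsto_id))

lemma integrableOn_exp_neg_mul_Ioi {c : ℝ} (hc : 0 < c) (t : ℝ) :
    IntegrableOn (fun s : ℝ => Real.exp (-(c * s))) (Ioi t) := by
  simpa [neg_mul] using exp_neg_integrableOn_Ioi t hc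

lemma integral_exp_neg_mul_Ioi {c : ℝ} (hc : 0 < c) (t : ℝ) :
    ∫ s in Ioi t, Real.exp (-(c * s)) = Real.exp (-(c * t)) / c := by
  have hderiv : ∀ x ∈ Ici t, HasDerivAt (fun y : ℝ => -(Real.exp (-(c * y)) / c)) (Real.exp (-(c * x))) x := by
    intro x _
    have h1 : HasDerivAt (fun y : ℝ => -(c * y)) (-c) x := by
      have := ((hasDerivAt_id x).const_mul c).neg
      simp only [mul_one] at this
      exact this
    have := ((h1.exp).div_const c).neg
    have h2 : -(Real.exp (-(c * x)) * -c / c) = Real.exp (-(c * x)) := by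
      field_simp
    rw [h2] at this
    exact this
  have := integral_Ioi_of_hasDerivAt_of_tendsto' hderiv (integrableOn_exp_neg_mul_Ioi hc t)
    (m := 0) ?_
  · simpa using this
  · have := ((tendsto_exp_neg_mul_atTop hc).div_const c).neg
    simpa using this

lemma exp_comb {x y z : ℝ} (hxy : x + y = z) : Real.exp x * Real.exp y = Real.exp z := by
  rw [← Real.exp_add, hxy]

lemma exp_comb_div {x y z c : ℝ} (hxy : x + y = z) :
    Real.exp x * (Real.exp y / c) = Real.exp z / c := by
  rw [← mul_div_assoc, exp_comb hxy]

lemma estIic {h : ℝ → ℝ} (hcont : Continuous h) {C β : ℝ} (hβ0 : 0 ≤ β) (hβ2 : β < 2)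
    (hb : ∀ s, |h s| ≤ C * Real.exp (-(β * |s|))) (t : ℝ) :
    IntegrableOn (fun s => Real.exp (2 * s) * h s) (Iic t) ∧
      |∫ s in Iic t, Real.exp (2 * s) * h s| ≤ C / (2 - β) * Real.exp (2 * t - β * |t|) := by
  have hC : 0 ≤ C := le_trans (abs_nonneg _) (by simpa using hb 0)
  set D := C * Real.exp (β * t - β * |t|) with hD
  have hg : IntegrableOn (fun s => D * Real.exp ((2 - β) * s)) (Iic t) :=
    (integrableOn_exp_mul_Iic (by linarith) t).const_mul D
  have hpt : ∀ s ∈ Iic t, ‖Real.exp (2 * s) * h s‖ ≤ D * Real.exp ((2 - β) * s) := by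
    intro s hs
    have hst : s ≤ t := hs
    have key : 2 * s - β * |s| ≤ (2 - β) * s + (β * t - β * |t|) := by
      rcases abs_cases s with ⟨h1, _⟩ | ⟨h1, _⟩ <;> rcases abs_cases t with ⟨h2, _⟩ | ⟨h2, _⟩ <;>
        nlinarith
    calc ‖Real.exp (2 * s) * h s‖ = Real.exp (2 * s) * |h s| := by
          rw [Real.norm_eq_abs, abs_mul, Real.abs_exp]
      _ ≤ Real.exp (2 * s) * (C * Real.exp (-(β * |s|))) := by
          gcongr; exact hb s
      _ = C * Real.exp (2 * s - β * |s|) := by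
          rw [mul_left_comm, exp_comb (by ring : 2 * s + -(β * |s|) = 2 * s - β * |s|)]
      _ ≤ C * Real.exp ((2 - β) * s + (β * t - β * |t|)) := by gcongr
      _ = D * Real.exp ((2 - β) * s) := by
          rw [hD, mul_assoc, mul_comm (Real.exp (β * t - β * |t|)),
            exp_comb (by ring : (2 - β) * s + (β * t - β * |t|) = (2 - β) * s + (β * t - β * |t|))]
  have hmeas : AEStronglyMeasurable (fun s => Real.exp (2 * s) * h s)
      (volume.restrict (Iic t)) :=
    ((Real.continuous_exp.comp (continuous_const.mul continuous_id)).mul hcont).aestronglyMeasurable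
  have hae : ∀ᵐ s ∂(volume.restrict (Iic t)), ‖Real.exp (2 * s) * h s‖ ≤ D * Real.exp ((2 - β) * s) :=
    (ae_restrict_iff' measurableSet_Iic).2 (Filter.Eventually.of_forall hpt)
  have hint : IntegrableOn (fun s => Real.exp (2 * s) * h s) (Iic t) :=
    Integrable.mono' hg hmeas hae
  refine ⟨hint, ?_⟩
  have hval : ∫ s in Iic t, D * Real.exp ((2 - β) * s) = D * (Real.exp ((2 - β) * t) / (2 - β)) := by
    rw [MeasureTheory.integral_const_mul, integral_exp_mul_Iic (by linarith)]
  calc |∫ s in Iic t, Real.exp (2 * s) * h s| ≤ ∫ s in Iic t, D * Real.exp ((2 - β) * s) := by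
        rw [← Real.norm_eq_abs]
        exact norm_integral_le_of_norm_le hg hae
    _ = C / (2 - β) * Real.exp (2 * t - β * |t|) := by
        rw [hval, hD, mul_assoc,
          exp_comb_div (by ring : β * t - β * |t| + (2 - β) * t = 2 * t - β * |t|)]
        ring

lemma estIoi {h : ℝ → ℝ} (hcont : Continuous h) {C β : ℝ} (hβ0 : 0 ≤ β) (hβ2 : β < 2)
    (hb : ∀ s, |h s| ≤ C * Real.exp (-(β * |s|))) (t : ℝ) :
    IntegrableOn (fun s => Real.exp (-(2 * s)) * h s) (Ioi t) ∧
      |∫ s in Ioi t, Real.exp (-(2 * s)) * h s| ≤ C / (2 - β) * Real.exp (-(2 * t) - β * |t|) := by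
  have hC : 0 ≤ C := le_trans (abs_nonneg _) (by simpa using hb 0)
  set D := C * Real.exp (-(β * t) - β * |t|) with hD
  have hg : IntegrableOn (fun s => D * Real.exp (-((2 - β) * s))) (Ioi t) :=
    (integrableOn_exp_neg_mul_Ioi (by linarith) t).const_mul D
  have hpt : ∀ s ∈ Ioi t, ‖Real.exp (-(2 * s)) * h s‖ ≤ D * Real.exp (-((2 - β) * s)) := by
    intro s hs
    have hst : t ≤ s := le_of_lt hs
    have key : -(2 * s) - β * |s| ≤ -((2 - β) * s) + (-(β * t) - β * |t|) := by
      rcases abs_cases s with ⟨h1, _⟩ | ⟨h1, _⟩ <;> rcases abs_cases t with ⟨h2, _⟩ | ⟨h2, _⟩ <;>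
        nlinarith
    calc ‖Real.exp (-(2 * s)) * h s‖ = Real.exp (-(2 * s)) * |h s| := by
          rw [Real.norm_eq_abs, abs_mul, Real.abs_exp]
      _ ≤ Real.exp (-(2 * s)) * (C * Real.exp (-(β * |s|))) := by
          gcongr; exact hb s
      _ = C * Real.exp (-(2 * s) - β * |s|) := by
          rw [mul_left_comm, exp_comb (by ring : -(2 * s) + -(β * |s|) = -(2 * s) - β * |s|)]
      _ ≤ C * Real.exp (-((2 - β) * s) + (-(β * t) - β * |t|)) := by gcongr
      _ = D * Real.exp (-((2 - β) * s)) := by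
          rw [hD, mul_assoc, mul_comm (Real.exp (-(β * t) - β * |t|)),
            exp_comb (by ring : -((2 - β) * s) + (-(β * t) - β * |t|) = -((2 - β) * s) + (-(β * t) - β * |t|))]
  have hmeas : AEStronglyMeasurable (fun s => Real.exp (-(2 * s)) * h s)
      (volume.restrict (Ioi t)) :=
    ((Real.continuous_exp.comp (continuous_const.mul continuous_id).neg).mul hcont).aestronglyMeasurable
  have hae : ∀ᵐ s ∂(volume.restrict (Ioi t)), ‖Real.exp (-(2 * s)) * h s‖ ≤ D * Real.exp (-((2 - β) * s)) :=
    (ae_restrict_iff' measurableSet_Ioi).2 (Filter.Eventually.of_forall hpt)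
  have hint : IntegrableOn (fun s => Real.exp (-(2 * s)) * h s) (Ioi t) :=
    Integrable.mono' hg hmeas hae
  refine ⟨hint, ?_⟩
  have hval : ∫ s in Ioi t, D * Real.exp (-((2 - β) * s)) = D * (Real.exp (-((2 - β) * t)) / (2 - β)) := by
    rw [MeasureTheory.integral_const_mul, integral_exp_neg_mul_Ioi (by linarith)]
  calc |∫ s in Ioi t, Real.exp (-(2 * s)) * h s| ≤ ∫ s in Ioi t, D * Real.exp (-((2 - β) * s)) := by
        rw [← Real.norm_eq_abs]
        exact norm_integral_le_of_norm_le hg hae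
    _ = C / (2 - β) * Real.exp (-(2 * t) - β * |t|) := by
        rw [hval, hD, mul_assoc,
          exp_comb_div (by ring : -(β * t) - β * |t| + -((2 - β) * t) = -(2 * t) - β * |t|)]
        ring

lemma integral_Ioi_sub_Ioi' {g : ℝ → ℝ} {a b : ℝ}
    (ha : IntegrableOn g (Ioi a)) (hb : IntegrableOn g (Ioi b)) :
    (∫ x in Ioi a, g x) - ∫ x in Ioi b, g x = ∫ x in a..b, g x := by
  wlog hab : a ≤ b generalizing a b
  · rw [intervalIntegral.integral_symm, ← this hb ha (le_of_not_ge hab), neg_sub]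
  rw [sub_eq_iff_eq_add, intervalIntegral.integral_of_le hab,
    ← setIntegral_union (Set.Ioc_disjoint_Ioi le_rfl) measurableSet_Ioi
      (ha.mono_set Set.Ioc_subset_Ioi_self) hb,
    Set.Ioc_union_Ioi_eq_Ioi hab]

noncomputable def GG (h : ℝ → ℝ) (t : ℝ) : ℝ :=
  4⁻¹ * (Real.exp (-(2 * t)) * (∫ s in Iic t, Real.exp (2 * s) * h s) +
    Real.exp (2 * t) * ∫ s in Ioi t, Real.exp (-(2 * s)) * h s)

noncomputable def GG' (h : ℝ → ℝ) (t : ℝ) : ℝ :=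
  2⁻¹ * (-(Real.exp (-(2 * t)) * ∫ s in Iic t, Real.exp (2 * s) * h s) +
    Real.exp (2 * t) * ∫ s in Ioi t, Real.exp (-(2 * s)) * h s)

lemma GG_bound {h : ℝ → ℝ} (hcont : Continuous h) {C β : ℝ} (hβ0 : 0 ≤ β) (hβ2 : β < 2)
    (hb : ∀ s, |h s| ≤ C * Real.exp (-(β * |s|))) (t : ℝ) :
    |GG h t| ≤ C / (2 * (2 - β)) * Real.exp (-(β * |t|)) := by
  obtain ⟨-, h1⟩ := estIic hcont hβ0 hβ2 hb t
  obtain ⟨-, h2⟩ := estIoi hcont hβ0 hβ2 hb t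
  have e1 : Real.exp (-(2 * t)) * (C / (2 - β) * Real.exp (2 * t - β * |t|)) =
      C / (2 - β) * Real.exp (-(β * |t|)) := by
    rw [mul_left_comm, exp_comb (by ring : -(2 * t) + (2 * t - β * |t|) = -(β * |t|))]
  have e2 : Real.exp (2 * t) * (C / (2 - β) * Real.exp (-(2 * t) - β * |t|)) =
      C / (2 - β) * Real.exp (-(β * |t|)) := by
    rw [mul_left_comm, exp_comb (by ring : 2 * t + (-(2 * t) - β * |t|) = -(β * |t|))]
  calc |GG h t| ≤ 4⁻¹ * (Real.exp (-(2 * t)) * |∫ s in Iic t, Real.exp (2 * s) * h s| +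
        Real.exp (2 * t) * |∫ s in Ioi t, Real.exp (-(2 * s)) * h s|) := by
        rw [GG, abs_mul, abs_of_nonneg (by norm_num : (0:ℝ) ≤ 4⁻¹)]
        gcongr
        calc |Real.exp (-(2 * t)) * (∫ s in Iic t, Real.exp (2 * s) * h s) +
              Real.exp (2 * t) * ∫ s in Ioi t, Real.exp (-(2 * s)) * h s| ≤
              |Real.exp (-(2 * t)) * ∫ s in Iic t, Real.exp (2 * s) * h s| +
              |Real.exp (2 * t) * ∫ s in Ioi t, Real.exp (-(2 * s)) * h s| := abs_add_le _ _
          _ = Real.exp (-(2 * t)) * |∫ s in Iic t, Real.exp (2 * s) * h s| +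
              Real.exp (2 * t) * |∫ s in Ioi t, Real.exp (-(2 * s)) * h s| := by
              rw [abs_mul, abs_mul, Real.abs_exp, Real.abs_exp]
    _ ≤ 4⁻¹ * (Real.exp (-(2 * t)) * (C / (2 - β) * Real.exp (2 * t - β * |t|)) +
        Real.exp (2 * t) * (C / (2 - β) * Real.exp (-(2 * t) - β * |t|))) := by gcongr
    _ = C / (2 * (2 - β)) * Real.exp (-(β * |t|)) := by
        rw [e1, e2]
        have hne : (2:ℝ) - β ≠ 0 := by linarith
        field_simp
        ring

lemma GG'_bound {h : ℝ → ℝ} (hcont : Continuous h) {C β : ℝ} (hβ0 : 0 ≤ β) (hβ2 : β < 2)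
    (hb : ∀ s, |h s| ≤ C * Real.exp (-(β * |s|))) (t : ℝ) :
    |GG' h t| ≤ C / (2 - β) * Real.exp (-(β * |t|)) := by
  obtain ⟨-, h1⟩ := estIic hcont hβ0 hβ2 hb t
  obtain ⟨-, h2⟩ := estIoi hcont hβ0 hβ2 hb t
  have e1 : Real.exp (-(2 * t)) * (C / (2 - β) * Real.exp (2 * t - β * |t|)) =
      C / (2 - β) * Real.exp (-(β * |t|)) := by
    rw [mul_left_comm, exp_comb (by ring : -(2 * t) + (2 * t - β * |t|) = -(β * |t|))]
  have e2 : Real.exp (2 * t) * (C / (2 - β) * Real.exp (-(2 * t) - β * |t|)) =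
      C / (2 - β) * Real.exp (-(β * |t|)) := by
    rw [mul_left_comm, exp_comb (by ring : 2 * t + (-(2 * t) - β * |t|) = -(β * |t|))]
  calc |GG' h t| ≤ 2⁻¹ * (Real.exp (-(2 * t)) * |∫ s in Iic t, Real.exp (2 * s) * h s| +
        Real.exp (2 * t) * |∫ s in Ioi t, Real.exp (-(2 * s)) * h s|) := by
        rw [GG', abs_mul, abs_of_nonneg (by norm_num : (0:ℝ) ≤ 2⁻¹)]
        gcongr
        calc |-(Real.exp (-(2 * t)) * ∫ s in Iic t, Real.exp (2 * s) * h s) +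
              Real.exp (2 * t) * ∫ s in Ioi t, Real.exp (-(2 * s)) * h s| ≤
              |-(Real.exp (-(2 * t)) * ∫ s in Iic t, Real.exp (2 * s) * h s)| +
              |Real.exp (2 * t) * ∫ s in Ioi t, Real.exp (-(2 * s)) * h s| := abs_add_le _ _
          _ = Real.exp (-(2 * t)) * |∫ s in Iic t, Real.exp (2 * s) * h s| +
              Real.exp (2 * t) * |∫ s in Ioi t, Real.exp (-(2 * s)) * h s| := by
              rw [abs_neg, abs_mul, abs_mul, Real.abs_exp, Real.abs_exp]
    _ ≤ 2⁻¹ * (Real.exp (-(2 * t)) * (C / (2 - β) * Real.exp (2 * t - β * |t|)) +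
        Real.exp (2 * t) * (C / (2 - β) * Real.exp (-(2 * t) - β * |t|))) := by gcongr
    _ = C / (2 - β) * Real.exp (-(β * |t|)) := by rw [e1, e2]; ring

lemma GG_hasDeriv {h : ℝ → ℝ} (hcont : Continuous h) {C β : ℝ} (hβ0 : 0 ≤ β) (hβ2 : β < 2)
    (hb : ∀ s, |h s| ≤ C * Real.exp (-(β * |s|))) (t : ℝ) :
    HasDerivAt (GG h) (GG' h t) t ∧ HasDerivAt (GG' h) (4 * GG h t - h t) t := by
  have hg1c : Continuous (fun s => Real.exp (2 * s) * h s) :=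
    (Real.continuous_exp.comp (continuous_const.mul continuous_id)).mul hcont
  have hg2c : Continuous (fun s => Real.exp (-(2 * s)) * h s) :=
    (Real.continuous_exp.comp (continuous_const.mul continuous_id).neg).mul hcont
  set A : ℝ → ℝ := fun x => ∫ s in Iic x, Real.exp (2 * s) * h s with hA
  set B : ℝ → ℝ := fun x => ∫ s in Ioi x, Real.exp (-(2 * s)) * h s with hB
  have hAint : ∀ x : ℝ, IntegrableOn (fun s => Real.exp (2 * s) * h s) (Iic x) :=
    fun x => (estIic hcont hβ0 hβ2 hb x).1
  have hBint : ∀ x : ℝ, IntegrableOn (fun s => Real.exp (-(2 * s)) * h s) (Ioi x) :=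
    fun x => (estIoi hcont hβ0 hβ2 hb x).1
  have hAeq : A = fun x => A 0 + ∫ u in (0:ℝ)..x, Real.exp (2 * u) * h u := by
    funext x
    have := intervalIntegral.integral_Iic_sub_Iic (hAint 0) (hAint x)
    simp only [hA]
    linarith [this]
  have hBeq : B = fun x => B 0 - ∫ u in (0:ℝ)..x, Real.exp (-(2 * u)) * h u := by
    funext x
    have := integral_Ioi_sub_Ioi' (hBint 0) (hBint x)
    simp only [hB]
    linarith [this]
  have hdA : ∀ x, HasDerivAt A (Real.exp (2 * x) * h x) x := by
    intro x
    rw [hAeq]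
    exact (intervalIntegral.integral_hasDerivAt_right (hg1c.intervalIntegrable 0 x)
      (hg1c.stronglyMeasurableAtFilter volume (nhds x)) hg1c.continuousAt).const_add (A 0)
  have hdB : ∀ x, HasDerivAt B (-(Real.exp (-(2 * x)) * h x)) x := by
    intro x
    rw [hBeq]
    exact (intervalIntegral.integral_hasDerivAt_right (hg2c.intervalIntegrable 0 x)
      (hg2c.stronglyMeasurableAtFilter volume (nhds x)) hg2c.continuousAt).const_sub (B 0)
  have hexp1 : ∀ x : ℝ, HasDerivAt (fun y : ℝ => Real.exp (-(2 * y))) (Real.exp (-(2 * x)) * (-2)) x := by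
    intro x
    have h1 : HasDerivAt (fun y : ℝ => 2 * y) 2 x := by simpa using (hasDerivAt_id x).const_mul 2
    exact h1.neg.exp
  have hexp2 : ∀ x : ℝ, HasDerivAt (fun y : ℝ => Real.exp (2 * y)) (Real.exp (2 * x) * 2) x := by
    intro x
    have h1 : HasDerivAt (fun y : ℝ => 2 * y) 2 x := by simpa using (hasDerivAt_id x).const_mul 2
    exact h1.exp
  have key1 : Real.exp (-(2 * t)) * Real.exp (2 * t) = 1 := by
    rw [exp_comb (by ring : -(2 * t) + 2 * t = 0), Real.exp_zero]
  have hGGeq : GG h = fun x => 4⁻¹ * (Real.exp (-(2 * x)) * A x + Real.exp (2 * x) * B x) := rfl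
  have hGG'eq : GG' h = fun x => 2⁻¹ * (-(Real.exp (-(2 * x)) * A x) + Real.exp (2 * x) * B x) := rfl
  constructor
  · rw [hGGeq]
    have hder := ((((hexp1 t).mul (hdA t)).add ((hexp2 t).mul (hdB t))).const_mul (4⁻¹ : ℝ))
    convert hder using 1
    · rfl
    · rfl
    · rfl
    rw [hGG'eq]
    simp only
    ring
  · rw [hGG'eq]
    have hder := (((((hexp1 t).mul (hdA t)).neg).add ((hexp2 t).mul (hdB t))).const_mul (2⁻¹ : ℝ))
    convert hder using 1
    · rfl
    · rfl
    · rfl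
    rw [hGGeq]
    simp only
    linear_combination (h t) * key1

lemma GG_sub {h1 h2 : ℝ → ℝ} {t : ℝ}
    (i1 : IntegrableOn (fun s => Real.exp (2 * s) * h1 s) (Iic t))
    (i2 : IntegrableOn (fun s => Real.exp (2 * s) * h2 s) (Iic t))
    (j1 : IntegrableOn (fun s => Real.exp (-(2 * s)) * h1 s) (Ioi t))
    (j2 : IntegrableOn (fun s => Real.exp (-(2 * s)) * h2 s) (Ioi t)) :
    GG (fun s => h1 s - h2 s) t = GG h1 t - GG h2 t := by
  unfold GG
  have e1 : ∫ s in Iic t, Real.exp (2 * s) * (h1 s - h2 s) =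
      (∫ s in Iic t, Real.exp (2 * s) * h1 s) - ∫ s in Iic t, Real.exp (2 * s) * h2 s := by
    simp only [mul_sub]
    exact integral_sub i1 i2
  have e2 : ∫ s in Ioi t, Real.exp (-(2 * s)) * (h1 s - h2 s) =
      (∫ s in Ioi t, Real.exp (-(2 * s)) * h1 s) - ∫ s in Ioi t, Real.exp (-(2 * s)) * h2 s := by
    simp only [mul_sub]
    exact integral_sub j1 j2
  rw [e1, e2]
  ring

noncomputable def aA (t : ℝ) : ℝ :=
  1 / 8 * Real.sin t + 1 / 8 * Real.sin (Real.sqrt 2 * t) + 3 / 4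

lemma aA_cont : Continuous aA := by
  unfold aA
  continuity

lemma aA_le (t : ℝ) : aA t ≤ 1 := by
  have h1 := Real.sin_le_one t
  have h2 := Real.sin_le_one (Real.sqrt 2 * t)
  unfold aA; linarith

lemma aA_ge (t : ℝ) : 1 / 2 ≤ aA t := by
  have h1 := Real.neg_one_le_sin t
  have h2 := Real.neg_one_le_sin (Real.sqrt 2 * t)
  unfold aA; linarith

lemma derivK (t x : ℝ) : deriv (K₂ t) x = 2 * aA t * x := by
  have : K₂ t = fun y => aA t * y ^ 2 := rfl
  rw [this, deriv_const_mul _ (differentiable_pow 2).differentiableAt]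
  simp [deriv_pow]
  ring

lemma derivW (t x : ℝ) : deriv (W₂ t) x = x ^ 3 := by
  have : W₂ t = fun y => 1 / 4 * y ^ 4 := rfl
  rw [this, deriv_const_mul _ (differentiable_pow 4).differentiableAt]
  simp [deriv_pow]

lemma f2_cont : Continuous f₂ := by
  unfold f₂
  continuity

lemma f2_pos (t : ℝ) : 0 < f₂ t := by
  unfold f₂
  positivity

lemma exp_small : Real.exp (1 / 64 : ℝ) ≤ 9 / 8 := by
  have h1 : (-(1 / 64) : ℝ) + 1 ≤ Real.exp (-(1 / 64)) := Real.add_one_le_exp _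
  have h2 : Real.exp (1 / 64 : ℝ) * Real.exp (-(1 / 64 : ℝ)) = 1 := by
    rw [← Real.exp_add]; norm_num
  nlinarith [Real.exp_pos (1 / 64 : ℝ)]

lemma f2_bound (s : ℝ) : |f₂ s| ≤ 9 / 256 * Real.exp (-(4⁻¹ * |s|)) := by
  have h0 : |f₂ s| = 1 / 32 * Real.exp (-s ^ 2) := abs_of_pos (f2_pos s)
  have hexp : Real.exp (-s ^ 2 + 4⁻¹ * |s|) ≤ Real.exp (1 / 64) := by
    apply Real.exp_le_exp.2
    nlinarith [sq_abs s, sq_nonneg (|s| - 1 / 8)]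
  calc |f₂ s| = 1 / 32 * (Real.exp (-s ^ 2 + 4⁻¹ * |s|) * Real.exp (-(4⁻¹ * |s|))) := by
        rw [h0, exp_comb (by ring : -s ^ 2 + 4⁻¹ * |s| + -(4⁻¹ * |s|) = -s ^ 2)]
    _ ≤ 1 / 32 * (Real.exp (1 / 64) * Real.exp (-(4⁻¹ * |s|))) := by
        gcongr
    _ ≤ 9 / 256 * Real.exp (-(4⁻¹ * |s|)) := by
        nlinarith [exp_small, Real.exp_pos (-(4⁻¹ * |s|))]

lemma tendsto_wt_atTop : Tendsto (fun t : ℝ => Real.exp (-(4⁻¹ * |t|))) atTop (nhds 0) :=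
  Real.tendsto_exp_atBot.comp (tendsto_neg_atBot_iff.mpr
    ((tendsto_const_mul_atTop_of_pos (by norm_num : (0:ℝ) < 4⁻¹)).2 tendsto_abs_atTop_atTop))

lemma tendsto_wt_atBot : Tendsto (fun t : ℝ => Real.exp (-(4⁻¹ * |t|))) atBot (nhds 0) :=
  Real.tendsto_exp_atBot.comp (tendsto_neg_atBot_iff.mpr
    ((tendsto_const_mul_atTop_of_pos (by norm_num : (0:ℝ) < 4⁻¹)).2 tendsto_abs_atBot_atTop))

open BoundedContinuousFunction in
def SS : Set (ℝ →ᵇ ℝ) := {q | ∀ t : ℝ, |q t| ≤ 1 / 8 * Real.exp (-(4⁻¹ * |t|))}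

lemma SS_closed : IsClosed SS := by
  have : SS = ⋂ t : ℝ, {q : ℝ →ᵇ ℝ | |q t| ≤ 1 / 8 * Real.exp (-(4⁻¹ * |t|))} := by
    ext q; simp [SS, Set.mem_iInter]
  rw [this]
  exact isClosed_iInter fun t =>
    isClosed_le ((continuous_eval_const t).abs) continuous_const

lemma SS_zero : (0 : ℝ →ᵇ ℝ) ∈ SS := by
  intro t
  simp only [BoundedContinuousFunction.coe_zero, Pi.zero_apply, abs_zero]
  positivity

noncomputable def Nf (q : ℝ →ᵇ ℝ) (s : ℝ) : ℝ :=
  (4 - 2 * aA s) * q s + (q s) ^ 3 - f₂ s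

lemma Nf_cont (q : ℝ →ᵇ ℝ) : Continuous (Nf q) := by
  unfold Nf
  exact (((continuous_const.sub (continuous_const.mul aA_cont)).mul q.continuous).add
    (q.continuous.pow 3)).sub f2_cont

lemma SS_abs_le {q : ℝ →ᵇ ℝ} (hq : q ∈ SS) (s : ℝ) : |q s| ≤ 1 / 8 := by
  refine (hq s).trans ?_
  have : Real.exp (-(4⁻¹ * |s|)) ≤ 1 := Real.exp_le_one_iff.2 (neg_nonpos.2 (by positivity))
  linarith

lemma Nf_bound {q : ℝ →ᵇ ℝ} (hq : q ∈ SS) (s : ℝ) :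
    |Nf q s| ≤ 211 / 512 * Real.exp (-(4⁻¹ * |s|)) := by
  set E := Real.exp (-(4⁻¹ * |s|)) with hE
  have hE0 : 0 < E := Real.exp_pos _
  have hE1 : E ≤ 1 := Real.exp_le_one_iff.2 (neg_nonpos.2 (by positivity))
  have hqs : |q s| ≤ 1 / 8 * E := hq s
  have haux : |4 - 2 * aA s| ≤ 3 := by
    have h1 := aA_le s; have h2 := aA_ge s
    rw [abs_le]; constructor <;> linarith
  have hcube : |(q s) ^ 3| ≤ 1 / 512 * E := by
    have h1 : |(q s) ^ 3| = |q s| ^ 3 := by rw [abs_pow]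
    have h2 : |q s| ^ 3 ≤ (1 / 8 * E) ^ 3 := by
      apply pow_le_pow_left₀ (abs_nonneg _) hqs
    have h3 : (1 / 8 * E : ℝ) ^ 3 ≤ 1 / 512 * E := by
      have h4 : 0 ≤ E * ((1 - E) * (1 + E)) :=
        mul_nonneg hE0.le (mul_nonneg (by linarith) (by linarith))
      nlinarith [h4]
    linarith
  have hlin : |(4 - 2 * aA s) * q s| ≤ 3 * (1 / 8 * E) := by
    rw [abs_mul]
    exact mul_le_mul haux hqs (abs_nonneg _) (by norm_num)
  have hf := f2_bound s
  calc |Nf q s| ≤ |(4 - 2 * aA s) * q s| + |(q s) ^ 3| + |f₂ s| := by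
        unfold Nf
        exact (abs_sub _ _).trans (by gcongr; exact abs_add_le _ _)
    _ ≤ 3 * (1 / 8 * E) + 1 / 512 * E + 9 / 256 * E := by
        rw [← hE] at hf
        gcongr
    _ ≤ 211 / 512 * E := by linarith

lemma exists_sol : ∃ q : ℝ → ℝ, ContDiff ℝ 2 q ∧
    (∀ t : ℝ, deriv (deriv q) t - deriv (K₂ t) (q t) + deriv (W₂ t) (q t) = f₂ t) ∧
    Tendsto q atTop (nhds 0) ∧ Tendsto q atBot (nhds 0) ∧
    Tendsto (deriv q) atTop (nhds 0) ∧ Tendsto (deriv q) atBot (nhds 0) := by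
  have hβ0 : (0:ℝ) ≤ 4⁻¹ := by norm_num
  have hβ2 : (4⁻¹:ℝ) < 2 := by norm_num
  have hβ0' : (0:ℝ) ≤ 0 := le_refl 0
  have hβ2' : (0:ℝ) < 2 := by norm_num
  have hGGd : ∀ q : ℝ →ᵇ ℝ, q ∈ SS → ∀ t,
      HasDerivAt (GG (Nf q)) (GG' (Nf q) t) t ∧
      HasDerivAt (GG' (Nf q)) (4 * GG (Nf q) t - Nf q t) t :=
    fun q hq t => GG_hasDeriv (Nf_cont q) hβ0 hβ2 (Nf_bound hq) t
  have hGGcont : ∀ q : ℝ →ᵇ ℝ, q ∈ SS → Continuous (GG (Nf q)) := fun q hq =>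
    continuous_iff_continuousAt.2 fun t => ((hGGd q hq t).1).differentiableAt.continuousAt
  have hGGmem : ∀ q : ℝ →ᵇ ℝ, q ∈ SS → ∀ t,
      |GG (Nf q) t| ≤ 1 / 8 * Real.exp (-(4⁻¹ * |t|)) := by
    intro q hq t
    have h1 := GG_bound (Nf_cont q) hβ0 hβ2 (Nf_bound hq) t
    have hE0 : (0:ℝ) < Real.exp (-(4⁻¹ * |t|)) := Real.exp_pos _
    nlinarith [h1]
  haveI : Nonempty SS := ⟨⟨0, SS_zero⟩⟩
  haveI : CompleteSpace SS := SS_closed.completeSpace_coe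
  have hmemT : ∀ q : ℝ →ᵇ ℝ, q ∈ SS → ∀ t, ‖GG (Nf q) t‖ ≤ 1 / 8 := by
    intro q hq t
    rw [Real.norm_eq_abs]
    refine (hGGmem q hq t).trans ?_
    have h1 : Real.exp (-(4⁻¹ * |t|)) ≤ 1 :=
      Real.exp_le_one_iff.2 (neg_nonpos.2 (by positivity))
    linarith
  set T : SS → SS := fun q =>
    ⟨BoundedContinuousFunction.ofNormedAddCommGroup (GG (Nf q.1)) (hGGcont q.1 q.2) (1 / 8)
      (hmemT q.1 q.2), fun t => hGGmem q.1 q.2 t⟩ with hT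
  have hTcoe : ∀ (q : SS) (t : ℝ), ((T q : SS) : ℝ →ᵇ ℝ) t = GG (Nf q.1) t := fun q t => rfl
  -- contraction estimate
  have hdiffb : ∀ q1 q2 : SS, ∀ s,
      |Nf q1.1 s - Nf q2.1 s| ≤ 195 / 64 * dist q1.1 q2.1 * Real.exp (-(0 * |s|)) := by
    intro q1 q2 s
    rw [show (-(0 * |s|) : ℝ) = 0 by ring, Real.exp_zero, mul_one]
    have hd : |q1.1 s - q2.1 s| ≤ dist q1.1 q2.1 := by
      rw [← Real.dist_eq]; exact BoundedContinuousFunction.dist_coe_le_dist s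
    have hDnn : (0:ℝ) ≤ dist q1.1 q2.1 := dist_nonneg
    have h1 : |q1.1 s| ≤ 1 / 8 := SS_abs_le q1.2 s
    have h2 : |q2.1 s| ≤ 1 / 8 := SS_abs_le q2.2 s
    have haux : |4 - 2 * aA s| ≤ 3 := by
      have := aA_le s; have := aA_ge s
      rw [abs_le]; constructor <;> linarith
    have heq : Nf q1.1 s - Nf q2.1 s = (4 - 2 * aA s) * (q1.1 s - q2.1 s) +
        (q1.1 s - q2.1 s) * (q1.1 s ^ 2 + q1.1 s * q2.1 s + q2.1 s ^ 2) := by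
      unfold Nf; ring
    have hsum : |q1.1 s ^ 2 + q1.1 s * q2.1 s + q2.1 s ^ 2| ≤ 3 / 64 := by
      have e1 : |q1.1 s ^ 2| ≤ 1 / 64 := by
        rw [abs_pow]
        calc |q1.1 s| ^ 2 ≤ (1/8 : ℝ) ^ 2 := by gcongr
          _ = 1 / 64 := by norm_num
      have e2 : |q2.1 s ^ 2| ≤ 1 / 64 := by
        rw [abs_pow]
        calc |q2.1 s| ^ 2 ≤ (1/8 : ℝ) ^ 2 := by gcongr
          _ = 1 / 64 := by norm_num
      have e3 : |q1.1 s * q2.1 s| ≤ 1 / 64 := by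
        rw [abs_mul]
        calc |q1.1 s| * |q2.1 s| ≤ (1/8 : ℝ) * (1/8) :=
              mul_le_mul h1 h2 (abs_nonneg _) (by norm_num)
          _ = 1 / 64 := by norm_num
      calc |q1.1 s ^ 2 + q1.1 s * q2.1 s + q2.1 s ^ 2| ≤
            |q1.1 s ^ 2 + q1.1 s * q2.1 s| + |q2.1 s ^ 2| := abs_add_le _ _
        _ ≤ |q1.1 s ^ 2| + |q1.1 s * q2.1 s| + |q2.1 s ^ 2| := by
            linarith [abs_add_le (q1.1 s ^ 2) (q1.1 s * q2.1 s)]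
        _ ≤ 3 / 64 := by linarith
    calc |Nf q1.1 s - Nf q2.1 s| ≤ |(4 - 2 * aA s) * (q1.1 s - q2.1 s)| +
          |(q1.1 s - q2.1 s) * (q1.1 s ^ 2 + q1.1 s * q2.1 s + q2.1 s ^ 2)| := by
          rw [heq]; exact abs_add_le _ _
      _ ≤ 3 * dist q1.1 q2.1 + dist q1.1 q2.1 * (3 / 64) := by
          rw [abs_mul, abs_mul]
          gcongr
      _ = 195 / 64 * dist q1.1 q2.1 := by ring
  have hcontract : ∀ q1 q2 : SS, dist (T q1) (T q2) ≤ 195 / 256 * dist q1 q2 := by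
    intro q1 q2
    rw [Subtype.dist_eq, Subtype.dist_eq]
    have hDnn : (0:ℝ) ≤ dist q1.1 q2.1 := dist_nonneg
    apply (BoundedContinuousFunction.dist_le (by positivity)).2
    intro t
    rw [Real.dist_eq]
    have hc1 : ((T q1 : SS) : ℝ →ᵇ ℝ) t = GG (Nf q1.1) t := rfl
    have hc2 : ((T q2 : SS) : ℝ →ᵇ ℝ) t = GG (Nf q2.1) t := rfl
    rw [hc1, hc2]
    have hsub : GG (fun s => Nf q1.1 s - Nf q2.1 s) t = GG (Nf q1.1) t - GG (Nf q2.1) t :=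
      GG_sub (estIic (Nf_cont q1.1) hβ0 hβ2 (Nf_bound q1.2) t).1
        (estIic (Nf_cont q2.1) hβ0 hβ2 (Nf_bound q2.2) t).1
        (estIoi (Nf_cont q1.1) hβ0 hβ2 (Nf_bound q1.2) t).1
        (estIoi (Nf_cont q2.1) hβ0 hβ2 (Nf_bound q2.2) t).1
    rw [← hsub]
    have hb := GG_bound ((Nf_cont q1.1).sub (Nf_cont q2.1)) hβ0' hβ2' (hdiffb q1 q2) t
    have hE : Real.exp (-(0 * |t|)) = 1 := by rw [show (-(0 * |t|) : ℝ) = 0 by ring, Real.exp_zero]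
    rw [hE] at hb
    calc |GG (fun s => Nf q1.1 s - Nf q2.1 s) t| ≤
          195 / 64 * dist q1.1 q2.1 / (2 * (2 - 0)) * 1 := hb
      _ = 195 / 256 * dist q1.1 q2.1 := by ring
  have hK1 : (195 / 256 : NNReal) < 1 := by
    rw [← NNReal.coe_lt_coe]
    push_cast
    norm_num
  have hlip : LipschitzWith (195 / 256) T := by
    apply LipschitzWith.of_dist_le_mul
    intro x y
    have hco : ((195 / 256 : NNReal) : ℝ) = 195 / 256 := by norm_num
    rw [hco]
    exact hcontract x y
  have hCW : ContractingWith (195 / 256) T := ⟨hK1, hlip⟩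
  set qfix : SS := ContractingWith.fixedPoint T hCW with hqfix
  have hfix : T qfix = qfix := hCW.fixedPoint_isFixedPt
  set q0 : ℝ →ᵇ ℝ := qfix.1 with hq0def
  have hq0 : q0 ∈ SS := qfix.2
  have heq : ∀ t, GG (Nf q0) t = q0 t := by
    intro t
    have h1 := congrArg (fun z : SS => ((z : ℝ →ᵇ ℝ) : ℝ → ℝ) t) hfix
    exact h1
  have hGGq : GG (Nf q0) = fun t => q0 t := funext heq
  have hd1 : ∀ t, HasDerivAt (fun t => q0 t) (GG' (Nf q0) t) t := by
    intro t
    have := (hGGd q0 hq0 t).1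
    rwa [hGGq] at this
  have hderiv1 : deriv (fun t => q0 t) = GG' (Nf q0) := funext fun t => (hd1 t).deriv
  have hd2 : ∀ t, HasDerivAt (GG' (Nf q0)) (4 * q0 t - Nf q0 t) t := by
    intro t
    have := (hGGd q0 hq0 t).2
    rwa [heq t] at this
  have hderiv2 : deriv (GG' (Nf q0)) = fun t => 4 * q0 t - Nf q0 t :=
    funext fun t => (hd2 t).deriv
  have hdd : ∀ t, deriv (deriv (fun t => q0 t)) t = 4 * q0 t - Nf q0 t := by
    intro t
    rw [hderiv1, hderiv2]
  have hc2 : Continuous (fun t => 4 * q0 t - Nf q0 t) :=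
    (continuous_const.mul q0.continuous).sub (Nf_cont q0)
  have hcd1 : ContDiff ℝ 1 (deriv (fun t => q0 t)) := by
    rw [hderiv1]
    apply contDiff_one_iff_deriv.2
    exact ⟨fun t => (hd2 t).differentiableAt, by rw [hderiv2]; exact hc2⟩
  have hcd : ContDiff ℝ 2 (fun t => q0 t) := by
    have h21 : (2 : WithTop ℕ∞) = 1 + 1 := by norm_num
    rw [h21]
    apply contDiff_succ_iff_deriv.2
    refine ⟨fun t => (hd1 t).differentiableAt, by simp, hcd1⟩
  refine ⟨fun t => q0 t, hcd, ?_, ?_, ?_, ?_, ?_⟩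
  · intro t
    rw [hdd t, derivK, derivW]
    unfold Nf
    ring
  · apply squeeze_zero_norm (fun t => by simpa [Real.norm_eq_abs] using hq0 t)
    have := tendsto_wt_atTop.const_mul (1/8 : ℝ)
    simpa using this
  · apply squeeze_zero_norm (fun t => by simpa [Real.norm_eq_abs] using hq0 t)
    have := tendsto_wt_atBot.const_mul (1/8 : ℝ)
    simpa using this
  · rw [hderiv1]
    have hlim : Tendsto (fun t : ℝ => 211/896 * Real.exp (-(4⁻¹ * |t|))) atTop (nhds 0) := by
      simpa using tendsto_wt_atTop.const_mul (211/896 : ℝ)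
    apply squeeze_zero_norm _ hlim
    intro t
    have hb := GG'_bound (Nf_cont q0) hβ0 hβ2 (Nf_bound hq0) t
    rw [Real.norm_eq_abs]
    calc |GG' (Nf q0) t| ≤ 211 / 512 / (2 - 4⁻¹) * Real.exp (-(4⁻¹ * |t|)) := hb
      _ ≤ 211 / 896 * Real.exp (-(4⁻¹ * |t|)) := by norm_num
  · rw [hderiv1]
    have hlim : Tendsto (fun t : ℝ => 211/896 * Real.exp (-(4⁻¹ * |t|))) atBot (nhds 0) := by
      simpa using tendsto_wt_atBot.const_mul (211/896 : ℝ)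
    apply squeeze_zero_norm _ hlim
    intro t
    have hb := GG'_bound (Nf_cont q0) hβ0 hβ2 (Nf_bound hq0) t
    rw [Real.norm_eq_abs]
    calc |GG' (Nf q0) t| ≤ 211 / 512 / (2 - 4⁻¹) * Real.exp (-(4⁻¹ * |t|)) := hb
      _ ≤ 211 / 896 * Real.exp (-(4⁻¹ * |t|)) := by norm_num

lemma contDiffK : ContDiff ℝ 1 (Function.uncurry K₂) := by
  have h : Function.uncurry K₂ = fun p : ℝ × ℝ =>
      (1 / 8 * Real.sin p.1 + 1 / 8 * Real.sin (Real.sqrt 2 * p.1) + 3 / 4) * p.2 ^ 2 := rfl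
  rw [h]
  exact (((contDiff_const.mul (Real.contDiff_sin.comp contDiff_fst)).add
    (contDiff_const.mul (Real.contDiff_sin.comp (contDiff_const.mul contDiff_fst)))).add
    contDiff_const).mul (contDiff_snd.pow 2)

lemma contDiffW : ContDiff ℝ 1 (Function.uncurry W₂) := by
  have h : Function.uncurry W₂ = fun p : ℝ × ℝ => 1 / 4 * p.2 ^ 4 := rfl
  rw [h]
  exact contDiff_const.mul (contDiff_snd.pow 4)

lemma setW : {y : ℝ | ∃ t q : ℝ, |q| = 1 ∧ y = W₂ t q} = {(1/4 : ℝ)} := by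
  ext y
  simp only [Set.mem_setOf_eq, Set.mem_singleton_iff]
  constructor
  · rintro ⟨t, q, hq, rfl⟩
    have h2 : q ^ 2 = 1 := by nlinarith [sq_abs q]
    have h4 : q ^ 4 = 1 := by nlinarith
    show W₂ t q = 1 / 4
    unfold W₂
    rw [h4]; norm_num
  · rintro rfl
    refine ⟨0, 1, by norm_num, by unfold W₂; norm_num⟩

lemma integrable_f2sq : Integrable (fun t : ℝ => |f₂ t| ^ 2) := by
  have hfx : (fun t : ℝ => |f₂ t| ^ 2) = fun t => 1 / 1024 * Real.exp (-2 * t ^ 2) := by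
    funext t
    rw [abs_of_pos (f2_pos t)]
    unfold f₂
    have h1 : (Real.exp (-t ^ 2)) ^ 2 = Real.exp (-2 * t ^ 2) := by
      rw [sq, exp_comb (by ring : -t ^ 2 + -t ^ 2 = -2 * t ^ 2)]
    rw [mul_pow, h1]
    norm_num
  rw [hfx]
  exact (integrable_exp_neg_mul_sq (by norm_num : (0:ℝ) < 2)).const_mul _

lemma integral_f2sq : ∫ t : ℝ, |f₂ t| ^ 2 = 1 / 1024 * Real.sqrt (Real.pi / 2) := by
  have hfx : (fun t : ℝ => |f₂ t| ^ 2) = fun t => 1 / 1024 * Real.exp (-2 * t ^ 2) := by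
    funext t
    rw [abs_of_pos (f2_pos t)]
    unfold f₂
    have h1 : (Real.exp (-t ^ 2)) ^ 2 = Real.exp (-2 * t ^ 2) := by
      rw [sq, exp_comb (by ring : -t ^ 2 + -t ^ 2 = -2 * t ^ 2)]
    rw [mul_pow, h1]
    norm_num
  rw [hfx, MeasureTheory.integral_const_mul, integral_gaussian]

lemma sqrt_half_32 : Real.sqrt (1/32 : ℝ) = Real.sqrt 2 / 8 := by
  rw [show (1/32 : ℝ) = (Real.sqrt 2 / 8) ^ 2 by
      rw [div_pow, Real.sq_sqrt (by norm_num : (0:ℝ) ≤ 2)]; norm_num,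
    Real.sqrt_sq (by positivity)]

lemma f2sq_lt : (∫ t : ℝ, |f₂ t| ^ 2) ^ ((1:ℝ)/2) <
    Real.sqrt 2 / 4 * (min 1 (2 * (1 / 2)) - 2 * (1 / 4)) := by
  have hmin : min (1:ℝ) (2 * (1 / 2)) = 1 := by norm_num
  rw [hmin, integral_f2sq]
  have hsq4 : Real.sqrt (4:ℝ) = 2 := by
    rw [show (4:ℝ) = 2 ^ 2 by norm_num, Real.sqrt_sq (by norm_num : (0:ℝ) ≤ 2)]
  have hb : (1:ℝ) / 1024 * Real.sqrt (Real.pi / 2) ≤ 1 / 512 := by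
    have h1 : Real.sqrt (Real.pi / 2) ≤ Real.sqrt 4 :=
      Real.sqrt_le_sqrt (by linarith [Real.pi_le_four])
    rw [hsq4] at h1
    linarith
  have h0 : (0:ℝ) ≤ 1 / 1024 * Real.sqrt (Real.pi / 2) := by positivity
  have hle : (1 / 1024 * Real.sqrt (Real.pi / 2)) ^ ((1:ℝ)/2) ≤ (1/512 : ℝ) ^ ((1:ℝ)/2) :=
    Real.rpow_le_rpow h0 hb (by norm_num)
  have heq2 : ((1/512 : ℝ)) ^ ((1:ℝ)/2) = Real.sqrt (1/512) := (Real.sqrt_eq_rpow _).symm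
  have hlt : Real.sqrt (1/512 : ℝ) < Real.sqrt (1/32 : ℝ) :=
    Real.sqrt_lt_sqrt (by norm_num) (by norm_num)
  calc (1 / 1024 * Real.sqrt (Real.pi / 2)) ^ ((1:ℝ)/2) ≤ (1/512 : ℝ) ^ ((1:ℝ)/2) := hle
    _ = Real.sqrt (1/512) := heq2
    _ < Real.sqrt (1/32) := hlt
    _ = Real.sqrt 2 / 8 := sqrt_half_32
    _ = Real.sqrt 2 / 4 * (1 - 2 * (1 / 4)) := by ring

/-- **Example 2.** `K₂`, `W₂`, `f₂` satisfy all hypotheses of the main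
theorem (with `b₁ = 1/2`, `b₂ = 1`, `μ = 4`, `m = 1/4`, `M = 1/4`, `b̄₁ = 1`), and hence
the corresponding system has a homoclinic-type solution. -/
theorem stmt18 :
    -- C¹-smoothness
    ContDiff ℝ 1 (Function.uncurry K₂) ∧ ContDiff ℝ 1 (Function.uncurry W₂) ∧
    -- (C1)
    (∀ L > (0:ℝ), ∃ C > (0:ℝ), ∀ t q : ℝ, |q| ≤ L →
      |deriv (K₂ t) q| ≤ C ∧ |deriv (W₂ t) q| ≤ C) ∧
    -- (C2) with b₁ = 1/2, b₂ = 1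
    (∀ t q : ℝ, 1 / 2 * q ^ 2 ≤ K₂ t q ∧ K₂ t q ≤ 1 * q ^ 2) ∧
    -- (C3)
    (∀ t q : ℝ, K₂ t q ≤ q * deriv (K₂ t) q ∧ q * deriv (K₂ t) q ≤ 2 * K₂ t q) ∧
    -- (C4)
    (∀ ε > (0:ℝ), ∃ δ > (0:ℝ), ∀ t q : ℝ, |q| ≤ δ → |deriv (W₂ t) q| ≤ ε * |q|) ∧
    -- (C5) with μ = 4
    (∀ t q : ℝ, q ≠ 0 → 0 < 4 * W₂ t q ∧ 4 * W₂ t q ≤ q * deriv (W₂ t) q) ∧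
    -- (C6) with m = 1/4
    IsGLB {y : ℝ | ∃ t q : ℝ, |q| = 1 ∧ y = W₂ t q} (1 / 4) ∧ (0:ℝ) < 1 / 4 ∧
    -- M = 1/4 < (1/2) b̄₁ with b̄₁ = min 1 (2 · (1/2)) = 1
    IsLUB {y : ℝ | ∃ t q : ℝ, |q| = 1 ∧ y = W₂ t q} (1 / 4) ∧
    (1 / 4 : ℝ) < 1 / 2 * min 1 (2 * (1 / 2)) ∧
    -- properties of f
    Continuous f₂ ∧ (∃ C : ℝ, ∀ t : ℝ, |f₂ t| ≤ C) ∧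
    Integrable (fun t : ℝ => |f₂ t| ^ 2) ∧
    (∫ t : ℝ, |f₂ t| ^ 2) ^ ((1:ℝ)/2) <
      Real.sqrt 2 / 4 * (min 1 (2 * (1 / 2)) - 2 * (1 / 4)) ∧
    -- consequence: existence of a homoclinic-type solution
    ∃ q : ℝ → ℝ, ContDiff ℝ 2 q ∧
      (∀ t : ℝ, deriv (deriv q) t - deriv (K₂ t) (q t) + deriv (W₂ t) (q t) = f₂ t) ∧
      Tendsto q atTop (nhds 0) ∧ Tendsto q atBot (nhds 0) ∧
      Tendsto (deriv q) atTop (nhds 0) ∧ Tendsto (deriv q) atBot (nhds 0) := by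
  refine ⟨contDiffK, contDiffW, ?_, ?_, ?_, ?_, ?_, ?_, by norm_num, ?_, ?_, f2_cont, ?_, integrable_f2sq, f2sq_lt, exists_sol⟩
  · -- (C1)
    intro L hL
    refine ⟨2 * L + L ^ 3, by positivity, fun t q hq => ⟨?_, ?_⟩⟩
    · rw [derivK]
      have h1 : |aA t| ≤ 1 := by
        rw [abs_le]; exact ⟨by linarith [aA_ge t], aA_le t⟩
      have h2 : |2 * aA t * q| = 2 * |aA t| * |q| := by
        rw [abs_mul, abs_mul, abs_two]
      rw [h2]
      nlinarith [abs_nonneg q, abs_nonneg (aA t), pow_nonneg hL.le 3]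
    · rw [derivW, abs_pow]
      have h3 : |q| ^ 3 ≤ L ^ 3 := pow_le_pow_left₀ (abs_nonneg q) hq 3
      nlinarith [abs_nonneg q]
  · -- (C2)
    intro t q
    have hK : K₂ t q = aA t * q ^ 2 := rfl
    have h1 := aA_ge t; have h2 := aA_le t
    constructor <;> (rw [hK]; nlinarith [sq_nonneg q])
  · -- (C3)
    intro t q
    have hK : K₂ t q = aA t * q ^ 2 := rfl
    rw [hK, derivK]
    have h1 := aA_ge t
    constructor <;> nlinarith [sq_nonneg q]
  · -- (C4)
    intro ε hε
    refine ⟨Real.sqrt ε, Real.sqrt_pos.2 hε, fun t q hq => ?_⟩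
    rw [derivW, abs_pow]
    have h1 : |q| ^ 2 ≤ ε := by
      calc |q| ^ 2 ≤ Real.sqrt ε ^ 2 := by gcongr
        _ = ε := Real.sq_sqrt hε.le
    calc |q| ^ 3 = |q| ^ 2 * |q| := by ring
      _ ≤ ε * |q| := by gcongr
  · -- (C5)
    intro t q hq
    have hW : W₂ t q = 1 / 4 * q ^ 4 := rfl
    rw [hW, derivW]
    constructor
    · have : 0 < q ^ 4 := by positivity
      linarith
    · nlinarith []
  · rw [setW]; exact isGLB_singleton
  · rw [setW]; exact isLUB_singleton
  · norm_num
  · exact ⟨1 / 32, fun t => by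
      rw [abs_of_pos (f2_pos t)]
      have h1 : Real.exp (-t ^ 2) ≤ 1 := Real.exp_le_one_iff.2 (neg_nonpos.2 (by positivity))
      unfold f₂; linarith⟩
end

section
/- Define K, W : ℝ × ℝ → ℝ by K(t,q) = q² and W(t,q) = (10/33)·q⁴·(arctan²(q²/(t²+1)) + 1). Then K and W satisfy conditions (C1)–(C6): in particular (C2) holds with b₁ = b₂ = 1, (C3) holds since q·∇_qK(t,q) = 2K(t,q), (C5) holds with μ = 4 since q·∇_qW(t,q) ≥ 4W(t,q) > 0 for q ≠ 0, and (C6) holds with m := inf{W(t,q) : t ∈ ℝ, |q| = 1} = 10/33 > 0; moreover M := sup{W(t,q) : t ∈ ℝ, |q| = 1} = (10/33)·(π²/16 + 1) < 1/2 = (1/2)·b̄₁ where b̄₁ := min{1, 2b₁} = 1. -/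
open MeasureTheory Filter

/-- The potential `K` of Example 3. -/
noncomputable def K₃ (t q : ℝ) : ℝ := q ^ 2

/-- The potential `W` of Example 3. -/
noncomputable def W₃ (t q : ℝ) : ℝ :=
  10 / 33 * q ^ 4 * (Real.arctan (q ^ 2 / (t ^ 2 + 1)) ^ 2 + 1)

/-- The derivative of `W₃ t`. -/
noncomputable def D₃ (t q : ℝ) : ℝ :=
  10 / 33 * (4 * q ^ 3) * (Real.arctan (q ^ 2 / (t ^ 2 + 1)) ^ 2 + 1) +
    10 / 33 * q ^ 4 *
      (2 * Real.arctan (q ^ 2 / (t ^ 2 + 1)) *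
        (1 / (1 + (q ^ 2 / (t ^ 2 + 1)) ^ 2) * (2 * q / (t ^ 2 + 1))))

lemma hasDerivAt_W₃ (t q : ℝ) : HasDerivAt (W₃ t) (D₃ t q) q := by
  have hdiv : HasDerivAt (fun q : ℝ => q ^ 2 / (t ^ 2 + 1)) (2 * q / (t ^ 2 + 1)) q := by
    simpa using (hasDerivAt_pow 2 q).div_const (t ^ 2 + 1)
  have harc : HasDerivAt (fun q : ℝ => Real.arctan (q ^ 2 / (t ^ 2 + 1)))
      (1 / (1 + (q ^ 2 / (t ^ 2 + 1)) ^ 2) * (2 * q / (t ^ 2 + 1))) q :=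
    (Real.hasDerivAt_arctan _).comp q hdiv
  have hsq : HasDerivAt (fun q : ℝ => Real.arctan (q ^ 2 / (t ^ 2 + 1)) ^ 2 + 1)
      (2 * Real.arctan (q ^ 2 / (t ^ 2 + 1)) *
        (1 / (1 + (q ^ 2 / (t ^ 2 + 1)) ^ 2) * (2 * q / (t ^ 2 + 1)))) q := by
    simpa using (harc.pow 2).add_const 1
  have hq4 : HasDerivAt (fun q : ℝ => 10 / 33 * q ^ 4) (10 / 33 * (4 * q ^ 3)) q := by
    simpa [mul_comm] using (hasDerivAt_pow 4 q).const_mul (10 / 33 : ℝ)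
  exact hq4.mul hsq

lemma derivW₃ (t q : ℝ) : deriv (W₃ t) q = D₃ t q := (hasDerivAt_W₃ t q).deriv

lemma derivK₃ (t q : ℝ) : deriv (K₃ t) q = 2 * q := by
  have h : K₃ t = fun q : ℝ => q ^ 2 := rfl
  rw [h]; simp

lemma arctan_le_two (x : ℝ) : Real.arctan x ≤ 2 := by
  have h := Real.arctan_lt_pi_div_two x
  have := Real.pi_lt_d2
  linarith

lemma arctan_nonneg' {x : ℝ} (h : 0 ≤ x) : 0 ≤ Real.arctan x := by
  have := Real.arctan_strictMono.monotone h
  simpa [Real.arctan_zero] using this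

lemma D₃_bound (t q : ℝ) : |D₃ t q| ≤ 10 * (|q| ^ 3 + |q| ^ 5) := by
  set u := q ^ 2 / (t ^ 2 + 1) with hu
  set A := Real.arctan u with hA
  have htpos : (0:ℝ) < t ^ 2 + 1 := by positivity
  have hu0 : 0 ≤ u := by positivity
  have hA0 : 0 ≤ A := arctan_nonneg' hu0
  have hA2 : A ≤ 2 := arctan_le_two u
  have hden : (1:ℝ) ≤ t ^ 2 + 1 := by nlinarith [sq_nonneg t]
  have h1u0 : 0 ≤ 1 / (1 + u ^ 2) := by positivity
  have h1u : 1 / (1 + u ^ 2) ≤ 1 := by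
    rw [div_le_one (by positivity)]; nlinarith [sq_nonneg u]
  have hqn : 0 ≤ |q| := abs_nonneg q
  have h1 : |10 / 33 * (4 * q ^ 3) * (A ^ 2 + 1)| ≤ 10 * |q| ^ 3 := by
    have e : |10 / 33 * (4 * q ^ 3) * (A ^ 2 + 1)|
        = 10 / 33 * (4 * |q| ^ 3) * (A ^ 2 + 1) := by
      rw [abs_mul, abs_mul, abs_mul, abs_pow, abs_of_nonneg (by positivity : (0:ℝ) ≤ A ^ 2 + 1)]
      norm_num
    rw [e]
    have hAsq : A ^ 2 ≤ 4 := by nlinarith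
    nlinarith [pow_nonneg hqn 3]
  have h2 : |10 / 33 * q ^ 4 * (2 * A * (1 / (1 + u ^ 2) * (2 * q / (t ^ 2 + 1))))|
      ≤ 10 * |q| ^ 5 := by
    have e : |10 / 33 * q ^ 4 * (2 * A * (1 / (1 + u ^ 2) * (2 * q / (t ^ 2 + 1))))|
        = 10 / 33 * |q| ^ 4 * (2 * A * (1 / (1 + u ^ 2) * (2 * |q| / (t ^ 2 + 1)))) := by
      simp only [abs_mul, abs_div, abs_pow, abs_one, abs_of_nonneg hA0,
        abs_of_nonneg (le_of_lt htpos), abs_of_nonneg (show (0:ℝ) ≤ 1 + u ^ 2 by positivity)]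
      norm_num
    rw [e]
    have hdiv : 2 * |q| / (t ^ 2 + 1) ≤ 2 * |q| :=
      div_le_self (by positivity) hden
    have step : 10 / 33 * |q| ^ 4 * (2 * A * (1 / (1 + u ^ 2) * (2 * |q| / (t ^ 2 + 1))))
        ≤ 10 / 33 * |q| ^ 4 * (2 * 2 * (1 * (2 * |q|))) := by
      gcongr
    nlinarith [pow_nonneg hqn 5, step]
  calc |D₃ t q| ≤ |10 / 33 * (4 * q ^ 3) * (A ^ 2 + 1)|
        + |10 / 33 * q ^ 4 * (2 * A * (1 / (1 + u ^ 2) * (2 * q / (t ^ 2 + 1))))| := by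
        rw [D₃]; exact abs_add_le _ _
    _ ≤ 10 * |q| ^ 3 + 10 * |q| ^ 5 := add_le_add h1 h2
    _ = 10 * (|q| ^ 3 + |q| ^ 5) := by ring

/-- **Example 3.** `K₃`, `W₃` satisfy (C1)–(C6), with `b₁ = b₂ = 1` in (C2),
`q ∇_q K₃ = 2 K₃` giving (C3), `μ = 4` in (C5) (indeed `q ∇_q W₃ ≥ 4 W₃ > 0` for `q ≠ 0`),
`m = 10/33 > 0` in (C6); moreover `M = (10/33)(π²/16 + 1) < 1/2 = (1/2) b̄₁` with
`b̄₁ = min 1 (2 b₁) = 1`. -/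
theorem stmt19 :
    -- C¹-smoothness
    ContDiff ℝ 1 (Function.uncurry K₃) ∧ ContDiff ℝ 1 (Function.uncurry W₃) ∧
    -- (C1)
    (∀ L > (0:ℝ), ∃ C > (0:ℝ), ∀ t q : ℝ, |q| ≤ L →
      |deriv (K₃ t) q| ≤ C ∧ |deriv (W₃ t) q| ≤ C) ∧
    -- (C2) with b₁ = b₂ = 1
    (∀ t q : ℝ, 1 * q ^ 2 ≤ K₃ t q ∧ K₃ t q ≤ 1 * q ^ 2) ∧
    -- (C3), which holds since q ∇_q K₃ = 2 K₃
    (∀ t q : ℝ, q * deriv (K₃ t) q = 2 * K₃ t q) ∧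
    (∀ t q : ℝ, K₃ t q ≤ q * deriv (K₃ t) q ∧ q * deriv (K₃ t) q ≤ 2 * K₃ t q) ∧
    -- (C4)
    (∀ ε > (0:ℝ), ∃ δ > (0:ℝ), ∀ t q : ℝ, |q| ≤ δ → |deriv (W₃ t) q| ≤ ε * |q|) ∧
    -- (C5) with μ = 4: q ∇_q W₃ ≥ 4 W₃ > 0 for q ≠ 0
    (∀ t q : ℝ, q ≠ 0 → 0 < 4 * W₃ t q ∧ 4 * W₃ t q ≤ q * deriv (W₃ t) q) ∧
    -- (C6) with m = 10/33
    IsGLB {y : ℝ | ∃ t q : ℝ, |q| = 1 ∧ y = W₃ t q} (10 / 33) ∧ (0:ℝ) < 10 / 33 ∧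
    -- M = (10/33)(π²/16 + 1) < 1/2 = (1/2) b̄₁ with b̄₁ = min 1 (2 · 1) = 1
    IsLUB {y : ℝ | ∃ t q : ℝ, |q| = 1 ∧ y = W₃ t q} (10 / 33 * (Real.pi ^ 2 / 16 + 1)) ∧
    10 / 33 * (Real.pi ^ 2 / 16 + 1) < 1 / 2 * min 1 (2 * 1) := by
  have hKsmooth : ContDiff ℝ 1 (Function.uncurry K₃) := by
    show ContDiff ℝ 1 (fun p : ℝ × ℝ => p.2 ^ 2)
    exact contDiff_snd.pow 2
  have hWsmooth : ContDiff ℝ 1 (Function.uncurry W₃) := by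
    show ContDiff ℝ 1 (fun p : ℝ × ℝ =>
      10 / 33 * p.2 ^ 4 * (Real.arctan (p.2 ^ 2 / (p.1 ^ 2 + 1)) ^ 2 + 1))
    have hg : ContDiff ℝ 1 (fun p : ℝ × ℝ => p.2 ^ 2 / (p.1 ^ 2 + 1)) :=
      (contDiff_snd.pow 2).div ((contDiff_fst.pow 2).add contDiff_const)
        (fun p => by positivity)
    have harc : ContDiff ℝ 1 (fun p : ℝ × ℝ => Real.arctan (p.2 ^ 2 / (p.1 ^ 2 + 1))) :=
      Real.contDiff_arctan.comp hg
    exact ((contDiff_const.mul (contDiff_snd.pow 4)).mul ((harc.pow 2).add contDiff_const))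
  refine ⟨hKsmooth, hWsmooth, ?_, ?_, ?_, ?_, ?_, ?_, ?_, by norm_num, ?_, ?_⟩
  · -- (C1)
    intro L hL
    refine ⟨2 * L + 10 * (L ^ 3 + L ^ 5), by positivity, fun t q hq => ?_⟩
    have hqn : 0 ≤ |q| := abs_nonneg q
    constructor
    · rw [derivK₃, abs_mul]
      have : |(2:ℝ)| = 2 := by norm_num
      rw [this]
      nlinarith [pow_le_pow_left₀ hqn hq 3, pow_le_pow_left₀ hqn hq 5,
        pow_nonneg hqn 3, pow_nonneg hqn 5]
    · rw [derivW₃]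
      have hb := D₃_bound t q
      have h3 : |q| ^ 3 ≤ L ^ 3 := pow_le_pow_left₀ hqn hq 3
      have h5 : |q| ^ 5 ≤ L ^ 5 := pow_le_pow_left₀ hqn hq 5
      nlinarith
  · -- (C2)
    intro t q; constructor <;> simp [K₃]
  · -- (C3) equality
    intro t q; rw [derivK₃]; simp [K₃]; ring
  · -- (C3)
    intro t q; rw [derivK₃]
    constructor
    · simp [K₃]; nlinarith [sq_nonneg q]
    · simp [K₃]; nlinarith
  · -- (C4)
    intro ε hε
    refine ⟨min 1 (Real.sqrt (ε / 20)), lt_min one_pos (Real.sqrt_pos.2 (by positivity)), ?_⟩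
    intro t q hq
    have hq1 : |q| ≤ 1 := hq.trans (min_le_left _ _)
    have hqs : |q| ≤ Real.sqrt (ε / 20) := hq.trans (min_le_right _ _)
    have hqn : 0 ≤ |q| := abs_nonneg q
    have hq2 : |q| ^ 2 ≤ ε / 20 := by
      have := Real.sq_sqrt (le_of_lt (by positivity : (0:ℝ) < ε / 20))
      nlinarith [pow_le_pow_left₀ hqn hqs 2]
    rw [derivW₃]
    have hb := D₃_bound t q
    have h53 : |q| ^ 5 ≤ |q| ^ 3 := by
      nlinarith [pow_nonneg hqn 3, pow_le_pow_left₀ hqn hq1 2]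
    have h3 : |q| ^ 3 = |q| ^ 2 * |q| := by ring
    nlinarith
  · -- (C5)
    intro t q hq
    have hq2 : 0 < q ^ 2 := by positivity
    have htpos : (0:ℝ) < t ^ 2 + 1 := by positivity
    have hu0 : 0 ≤ q ^ 2 / (t ^ 2 + 1) := by positivity
    have hA0 : 0 ≤ Real.arctan (q ^ 2 / (t ^ 2 + 1)) := arctan_nonneg' hu0
    have hA2 := sq_nonneg (Real.arctan (q ^ 2 / (t ^ 2 + 1)))
    constructor
    · have : 0 < q ^ 4 := by positivity
      unfold W₃; nlinarith
    · rw [derivW₃]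
      have key : q * D₃ t q = 4 * W₃ t q +
          40 / 33 * Real.arctan (q ^ 2 / (t ^ 2 + 1)) *
            (1 / (1 + (q ^ 2 / (t ^ 2 + 1)) ^ 2)) * (q ^ 6 / (t ^ 2 + 1)) := by
        unfold W₃ D₃; ring
      have hpos : 0 ≤ 40 / 33 * Real.arctan (q ^ 2 / (t ^ 2 + 1)) *
          (1 / (1 + (q ^ 2 / (t ^ 2 + 1)) ^ 2)) * (q ^ 6 / (t ^ 2 + 1)) := by positivity
      linarith [key.ge, key.le]
  · -- (C6) GLB
    constructor
    · rintro y ⟨t, q, hq, rfl⟩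
      have hq2 : q ^ 2 = 1 := by
        have : |q| ^ 2 = 1 := by rw [hq]; norm_num
        rwa [sq_abs] at this
      have hq4 : q ^ 4 = 1 := by nlinarith
      unfold W₃
      rw [hq4]
      nlinarith [sq_nonneg (Real.arctan (q ^ 2 / (t ^ 2 + 1)))]
    · intro b hb
      have hmem : ∀ t : ℝ, b ≤ W₃ t 1 := fun t => hb ⟨t, 1, by norm_num, rfl⟩
      have h1 : Filter.Tendsto (fun t : ℝ => t ^ 2 + 1) atTop atTop :=
        tendsto_atTop_add_const_right _ 1 (tendsto_pow_atTop two_ne_zero)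
      have h2 : Filter.Tendsto (fun t : ℝ => (1:ℝ) / (t ^ 2 + 1)) atTop (nhds 0) := by
        simp only [one_div]; exact h1.inv_tendsto_atTop
      have h3 : Filter.Tendsto (fun t : ℝ => Real.arctan (1 / (t ^ 2 + 1))) atTop (nhds 0) := by
        have := (Real.continuous_arctan.tendsto 0).comp h2
        simpa [Real.arctan_zero, Function.comp_def] using this
      have hc : Continuous (fun x : ℝ => 10 / 33 * (x ^ 2 + 1)) := by continuity
      have h4 : Filter.Tendsto (fun t : ℝ => W₃ t 1) atTop (nhds (10 / 33)) := by
        have := (hc.tendsto 0).comp h3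
        have he : (fun t : ℝ => W₃ t 1)
            = (fun x : ℝ => 10 / 33 * (x ^ 2 + 1)) ∘ (fun t : ℝ => Real.arctan (1 / (t ^ 2 + 1))) := by
          funext t; simp [W₃, Function.comp_def]
        rw [he]
        simpa using this
      exact ge_of_tendsto' h4 hmem
  · -- LUB
    constructor
    · rintro y ⟨t, q, hq, rfl⟩
      have hq2 : q ^ 2 = 1 := by
        have : |q| ^ 2 = 1 := by rw [hq]; norm_num
        rwa [sq_abs] at this
      have hq4 : q ^ 4 = 1 := by nlinarith
      have htpos : (0:ℝ) < t ^ 2 + 1 := by positivity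
      have hle1 : q ^ 2 / (t ^ 2 + 1) ≤ 1 := by
        rw [div_le_one htpos, hq2]
        nlinarith [sq_nonneg t]
      have hA0 : 0 ≤ Real.arctan (q ^ 2 / (t ^ 2 + 1)) :=
        arctan_nonneg' (by positivity)
      have hAle : Real.arctan (q ^ 2 / (t ^ 2 + 1)) ≤ Real.pi / 4 := by
        have := Real.arctan_strictMono.monotone hle1
        rwa [Real.arctan_one] at this
      unfold W₃
      rw [hq4]
      nlinarith [sq_nonneg (Real.arctan (q ^ 2 / (t ^ 2 + 1)) - Real.pi / 4)]
    · intro b hb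
      have hmem : W₃ 0 1 ∈ {y : ℝ | ∃ t q : ℝ, |q| = 1 ∧ y = W₃ t q} :=
        ⟨0, 1, by norm_num, rfl⟩
      have := hb hmem
      have he : W₃ 0 1 = 10 / 33 * (Real.pi ^ 2 / 16 + 1) := by
        simp [W₃, Real.arctan_one]; ring
      linarith [he ▸ this]
  · -- final inequality
    have hpi := Real.pi_lt_d2
    have hpi0 := Real.pi_pos
    have hmin : (min (1:ℝ) (2 * 1)) = 1 := by norm_num
    rw [hmin]
    nlinarith [sq_nonneg (Real.pi - 3.15)]
end
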